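/- arXiv:0907.1004 — 3 statements merged into one kernel-verified Lean document; each statement's English description precedes it below -/
import Mathlib

section
/- For any natural numbers n and k, the alternating sum g(n,k) = \sum_{j=0}^{2n+1-k} (-1)^j \binom{2n+1}{j} \binom{2n+1}{j+k} equals 0 when k is even, and equals (-1)^{n+(k-1)/2} \binom{2n+1}{n-(k-1)/2} when k is odd (with the convention that binomial coefficients with negative lower index are 0). -/
open Finset Polynomial
open scoped Classical

noncomputable section
/-- Binomial coefficient `a choose b` with integer lower index, equal to `0`
when `b < 0`. -/
def chooseInt (a : ℕ) (b : ℤ) : ℤ := if 0 ≤ b then a.choose b.toNat else 0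


lemma coeff_one_sub_X_pow (N j : ℕ) :
    ((1 - X : ℤ[X]) ^ N).coeff j = (-1)^j * N.choose j := by
  induction N generalizing j with
  | zero => cases j <;> simp [coeff_one]
  | succ N ih =>
    rw [pow_succ, mul_sub, mul_one, coeff_sub]
    cases j with
    | zero => simp [ih]
    | succ j =>
      rw [coeff_mul_X, ih, ih, Nat.choose_succ_succ]
      push_cast; ring

lemma key (n k : ℕ) (hk : k ≤ 2*n+1) :
    ∑ j ∈ Finset.range (2*n+1-k+1),
        (-1 : ℤ)^j * (2*n+1).choose j * (2*n+1).choose (j+k) =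
    if 2 ∣ (2*n+1-k) then
      (-1)^((2*n+1-k)/2) * ((2*n+1).choose ((2*n+1-k)/2) : ℤ) else 0 := by
  set N := 2*n+1 with hN
  have h1 : ((1 - X : ℤ[X]) * (1 + X)) ^ N = expand ℤ 2 ((1 - X) ^ N) := by
    rw [map_pow, map_sub, map_one, expand_X]
    ring_nf
  have h2 := congrArg (fun p : ℤ[X] => p.coeff (N - k)) h1
  simp only [mul_pow, coeff_expand (by norm_num : 0 < 2)] at h2
  rw [coeff_mul, Finset.Nat.sum_antidiagonal_eq_sum_range_succ_mk] at h2
  have h3 : ∀ j ∈ Finset.range (N-k+1),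
      ((1 - X : ℤ[X])^N).coeff j * ((1 + X : ℤ[X])^N).coeff (N - k - j) =
      (-1 : ℤ)^j * N.choose j * N.choose (j+k) := by
    intro j hj
    rw [Finset.mem_range] at hj
    rw [coeff_one_sub_X_pow, coeff_one_add_X_pow]
    have e : N - k - j = N - (j + k) := by omega
    rw [e, Nat.choose_symm (by omega), mul_assoc]
  rw [Finset.sum_congr rfl h3] at h2
  rw [h2]
  split_ifs with h
  · rw [coeff_one_sub_X_pow]
  · rfl
/-- `g(n,k) = ∑_{j=0}^{2n+1-k} (-1)^j C(2n+1,j) C(2n+1,j+k)` vanishes for even `k`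
and equals `(-1)^{n+(k-1)/2} C(2n+1, n-(k-1)/2)` for odd `k`. -/
theorem stmt0 (n k : ℕ) :
    (Even k →
      ∑ j ∈ Finset.range (2*n+1-k+1),
        (-1 : ℤ)^j * (2*n+1).choose j * (2*n+1).choose (j+k) = 0) ∧
    (Odd k →
      ∑ j ∈ Finset.range (2*n+1-k+1),
        (-1 : ℤ)^j * (2*n+1).choose j * (2*n+1).choose (j+k) =
      (-1)^(n+(k-1)/2) * chooseInt (2*n+1) ((n : ℤ) - ((k-1)/2 : ℕ))) := by
  by_cases hk : k ≤ 2*n+1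
  · constructor
    · intro he
      rw [key n k hk, if_neg]
      obtain ⟨m, rfl⟩ := he
      omega
    · intro ho
      obtain ⟨a, rfl⟩ := ho
      have ha : a ≤ n := by omega
      rw [key n _ hk, if_pos (by omega)]
      have e1 : (2*n+1 - (2*a+1))/2 = n - a := by omega
      have e2 : (2*a+1-1)/2 = a := by omega
      rw [e1, e2, chooseInt, if_pos (by omega : (0:ℤ) ≤ (n:ℤ) - a)]
      have e3 : ((n:ℤ) - a).toNat = n - a := by omega
      rw [e3]
      have e4 : n + a = (n - a) + 2*a := by omega
      rw [e4, pow_add, pow_mul]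
      norm_num
  · have h0 : 2*n+1-k = 0 := by omega
    have hc : (2*n+1).choose k = 0 := Nat.choose_eq_zero_of_lt (by omega)
    constructor
    · intro _
      simp [h0, hc]
    · intro ho
      obtain ⟨a, rfl⟩ := ho
      have hc' : (2*n+1).choose (0 + (2*a+1)) = 0 := by rw [zero_add]; exact hc
      rw [h0]
      rw [zero_add, Finset.range_one, Finset.sum_singleton, hc']
      simp only [Nat.cast_zero, mul_zero]
      rw [chooseInt, if_neg (by push_cast; omega)]
      ring
end
end

section
/- With A_n and B_n as above, B_n(y,q) = \sum_{k=0}^n \binom{n}{k} (-y)^{n-k} A_k(y,q). -/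
open Finset Polynomial
open scoped Classical

noncomputable section
/-- Extension of a permutation of `Fin n` to a function on `ℕ` acting on `{1,…,n}`,
with the conventions `permVal σ 0 = 0` and `permVal σ j = j` for `j > n`. -/
def permVal {n : ℕ} (σ : Equiv.Perm (Fin n)) (j : ℕ) : ℕ :=
  if h : 1 ≤ j ∧ j ≤ n then (σ ⟨j - 1, by omega⟩ : ℕ) + 1 else j

/-- Number of weak exceedances of a permutation of `{1,…,n}`. -/
def wex {n : ℕ} (σ : Equiv.Perm (Fin n)) : ℕ :=
  ((Finset.Icc 1 n).filter fun i => i ≤ permVal σ i).card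

/-- Number of crossings of a permutation of `{1,…,n}`: pairs `(i,j)` with
`i < j ≤ σ(i) < σ(j)` or `σ(i) < σ(j) < i < j`. -/
def cr {n : ℕ} (σ : Equiv.Perm (Fin n)) : ℕ :=
  (((Finset.Icc 1 n) ×ˢ (Finset.Icc 1 n)).filter fun p =>
    (p.1 < p.2 ∧ p.2 ≤ permVal σ p.1 ∧ permVal σ p.1 < permVal σ p.2) ∨
    (permVal σ p.1 < permVal σ p.2 ∧ permVal σ p.2 < p.1 ∧ p.1 < p.2)).card

/-- `A_n(y,q) = ∑_{σ ∈ S_n} y^{wex σ} q^{cr σ}`. -/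
def Apoly (n : ℕ) {R : Type*} [CommRing R] (y q : R) : R :=
  ∑ σ : Equiv.Perm (Fin n), y ^ wex σ * q ^ cr σ

/-- `B_n(y,q) = ∑_{σ ∈ D_n} y^{wex σ} q^{cr σ}`, the sum restricted to derangements. -/
def Bpoly (n : ℕ) {R : Type*} [CommRing R] (y q : R) : R :=
  ∑ σ ∈ Finset.univ.filter (fun σ : Equiv.Perm (Fin n) => ∀ i, σ i ≠ i),
    y ^ wex σ * q ^ cr σ

/-!
Removing the fixed points of a permutation and compressing the remaining points order-preservingly
yields a derangement; a fixed point is a weak exceedance and lies on no crossing, so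
`A_n = ∑_j C(n,j) y^(n-j) B_j`. Binomial inversion turns this into the claimed formula.
-/

theorem sum_choose_mul_choose_mul_pow {R : Type*} [CommRing R] (x z : R) {n j : ℕ}
    (hj : j ≤ n) :
    ∑ k ∈ range (n + 1), (n.choose k * k.choose j : R) * x ^ (n - k) * z ^ (k - j)
      = n.choose j * (z + x) ^ (n - j) := by
  obtain ⟨d, rfl⟩ := Nat.exists_eq_add_of_le hj
  rw [show j + d + 1 = j + (d + 1) by omega, sum_range_add, Nat.add_sub_cancel_left, add_pow,
    mul_sum,
    sum_eq_zero fun k hk => by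
      rw [Nat.choose_eq_zero_of_lt (mem_range.1 hk)]; simp, zero_add]
  refine sum_congr rfl fun m hm => ?_
  have hm : m ≤ d := Nat.lt_succ_iff.1 (mem_range.1 hm)
  rw [← Nat.cast_mul, Nat.choose_mul (Nat.le_add_right j m)]
  simp only [Nat.add_sub_cancel_left, show j + d - (j + m) = d - m by omega]
  push_cast; ring

theorem binomial_inversion {R : Type*} [CommRing R] (a : R) {f g : ℕ → R}
    (h : ∀ m, f m = ∑ j ∈ range (m + 1), (m.choose j : R) * a ^ (m - j) * g j) (n : ℕ) :
    g n = ∑ k ∈ range (n + 1), (n.choose k : R) * (-a) ^ (n - k) * f k := by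
  have hext : ∀ k ∈ range (n + 1),
      f k = ∑ j ∈ range (n + 1), (k.choose j : R) * a ^ (k - j) * g j := by
    intro k hk
    rw [h k]
    refine sum_subset (range_subset_range.2 (by simpa [Nat.lt_succ_iff] using hk)) fun j _ hj => ?_
    rw [Nat.choose_eq_zero_of_lt (by simpa using hj)]; simp
  calc g n = ∑ j ∈ range (n + 1), (n.choose j : R) * (a + -a) ^ (n - j) * g j := by
        rw [sum_eq_single_of_mem n (self_mem_range_succ n) fun j hj hjn => by
          rw [add_neg_cancel, zero_pow (by grind), mul_zero, zero_mul]]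
        simp
    _ = _ := by
        symm
        rw [sum_congr rfl fun k hk => by rw [hext k hk, mul_sum], sum_comm]
        refine sum_congr rfl fun j hj => ?_
        rw [← sum_choose_mul_choose_mul_pow (-a) a (Nat.lt_succ_iff.1 (mem_range.1 hj)), sum_mul]
        refine sum_congr rfl fun k _ => by ring

namespace Equiv.Perm

variable {α β : Type*} [LinearOrder α] [LinearOrder β]

def IsCrossing (σ : Perm α) (i j : α) : Prop :=
  (i < j ∧ j ≤ σ i ∧ σ i < σ j) ∨ (σ i < σ j ∧ σ j < i ∧ i < j)

theorem IsCrossing.apply_left_ne {σ : Perm α} {i j : α} (h : σ.IsCrossing i j) :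
    σ i ≠ i := by
  intro hi
  rw [IsCrossing, hi] at h
  rcases h with h | h <;> order

theorem IsCrossing.apply_right_ne {σ : Perm α} {i j : α} (h : σ.IsCrossing i j) :
    σ j ≠ j := by
  intro hj
  rw [IsCrossing, hj] at h
  rcases h with h | h <;> order

theorem isCrossing_apply_orderEmbedding_iff (e : α ↪o β) {σ : Perm α} {τ : Perm β}
    (hτ : ∀ x, τ (e x) = e (σ x)) {x y : α} :
    τ.IsCrossing (e x) (e y) ↔ σ.IsCrossing x y := by
  simp only [IsCrossing, hτ, e.lt_iff_lt, e.le_iff_le]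

variable [Fintype α] [Fintype β]

def weakExceedances (σ : Perm α) : Finset α := univ.filter fun i => i ≤ σ i

def crossings (σ : Perm α) : Finset (α × α) := univ.filter fun p => σ.IsCrossing p.1 p.2

section OrderEmbedding

variable (e : α ↪o β) {σ : Perm α} {τ : Perm β} (hτ : ∀ x, τ (e x) = e (σ x))
  (hfix : ∀ b, b ∉ Set.range e → τ b = b)
include hτ hfix

theorem crossings_eq_map_of_orderEmbedding :
    τ.crossings = σ.crossings.map (e.toEmbedding.prodMap e.toEmbedding) := by
  ext ⟨a, b⟩
  simp only [crossings, mem_filter, mem_univ, true_and, mem_map, Prod.exists,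
    Function.Embedding.coe_prodMap, Prod.map_apply, Prod.mk.injEq]
  constructor
  · intro h
    obtain ⟨x, rfl⟩ : a ∈ Set.range e := by_contra fun ha => h.apply_left_ne (hfix a ha)
    obtain ⟨y, rfl⟩ : b ∈ Set.range e := by_contra fun hb => h.apply_right_ne (hfix b hb)
    exact ⟨x, y, (isCrossing_apply_orderEmbedding_iff e hτ).1 h, rfl, rfl⟩
  · rintro ⟨x, y, h, rfl, rfl⟩
    exact (isCrossing_apply_orderEmbedding_iff e hτ).2 h

theorem weakExceedances_eq_of_orderEmbedding :
    τ.weakExceedances = (univ.map e.toEmbedding)ᶜ ∪ σ.weakExceedances.map e.toEmbedding := by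
  ext b
  simp only [weakExceedances, mem_union, mem_compl, mem_map, mem_filter, mem_univ, true_and]
  by_cases hb : b ∈ Set.range e
  · obtain ⟨x, rfl⟩ := hb
    simp [hτ]
  · simp_all

theorem card_weakExceedances_of_orderEmbedding :
    #τ.weakExceedances = (Fintype.card β - Fintype.card α) + #σ.weakExceedances := by
  rw [weakExceedances_eq_of_orderEmbedding e hτ hfix, card_union_of_disjoint, card_compl,
    card_map, card_map, card_univ]
  exact disjoint_compl_left.mono_right (map_subset_map.2 (subset_univ _))

end OrderEmbedding

end Equiv.Perm

theorem permVal_val_add_one {n : ℕ} (σ : Equiv.Perm (Fin n)) (i : Fin n) :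
    permVal σ (i + 1) = σ i + 1 := by
  rw [permVal, dif_pos ⟨by omega, i.isLt⟩]
  simp

theorem Icc_one_eq_map_univ (n : ℕ) :
    Icc 1 n = (univ : Finset (Fin n)).map (Fin.valEmbedding.trans (addRightEmbedding 1)) := by
  ext m
  simp only [mem_Icc, mem_map, mem_univ, true_and, Function.Embedding.trans_apply,
    Fin.valEmbedding_apply, addRightEmbedding_apply]
  exact ⟨fun h => ⟨⟨m - 1, by omega⟩, by simp; omega⟩, by rintro ⟨i, rfl⟩; omega⟩

theorem wex_eq_card_weakExceedances {n : ℕ} (σ : Equiv.Perm (Fin n)) :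
    wex σ = #σ.weakExceedances := by
  rw [wex, Icc_one_eq_map_univ, filter_map, card_map, Equiv.Perm.weakExceedances]
  exact congrArg card (filter_congr fun i _ => by simp [permVal_val_add_one])

theorem cr_eq_card_crossings {n : ℕ} (σ : Equiv.Perm (Fin n)) :
    cr σ = #σ.crossings := by
  rw [cr, Icc_one_eq_map_univ, ← prodMap_map_product, filter_map, card_map,
    Equiv.Perm.crossings, univ_product_univ]
  exact congrArg card (filter_congr fun p _ => by simp [permVal_val_add_one, Equiv.Perm.IsCrossing])

theorem pow_wex_mul_pow_cr_of_orderEmbedding {R : Type*} [CommRing R] (y q : R) {k n : ℕ}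
    (e : Fin k ↪o Fin n) {σ : Equiv.Perm (Fin k)} {τ : Equiv.Perm (Fin n)}
    (hτ : ∀ x, τ (e x) = e (σ x)) (hfix : ∀ b, b ∉ Set.range e → τ b = b) :
    y ^ wex τ * q ^ cr τ = y ^ (n - k) * (y ^ wex σ * q ^ cr σ) := by
  rw [wex_eq_card_weakExceedances, wex_eq_card_weakExceedances, cr_eq_card_crossings,
    cr_eq_card_crossings, Equiv.Perm.card_weakExceedances_of_orderEmbedding e hτ hfix,
    Equiv.Perm.crossings_eq_map_of_orderEmbedding e hτ hfix, card_map, Fintype.card_fin,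
    Fintype.card_fin, pow_add, mul_assoc]

def derangementsEquivSupportEq {n : ℕ} (s : Finset (Fin n)) :
    derangements (Fin #s) ≃ {σ : Equiv.Perm (Fin n) // σ.support = s} :=
  (Equiv.derangementsCongr (s.orderIsoOfFin rfl).toEquiv).trans <|
    (derangements.subtypeEquiv (· ∈ s)).trans <| Equiv.subtypeEquivRight fun σ => by
      simp only [Finset.ext_iff, Equiv.Perm.mem_support, Function.mem_fixedPoints,
        Function.IsFixedPt, not_iff_comm (a := _ ∈ s)]

theorem derangementsEquivSupportEq_apply {n : ℕ} (s : Finset (Fin n))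
    (δ : derangements (Fin #s)) :
    (derangementsEquivSupportEq s δ : Equiv.Perm (Fin n)) =
      Equiv.Perm.ofSubtype ((s.orderIsoOfFin rfl).toEquiv.permCongr δ) := rfl

theorem sum_support_eq_pow_wex_mul_pow_cr {R : Type*} [CommRing R] (y q : R) {n : ℕ}
    (s : Finset (Fin n)) :
    ∑ σ : Equiv.Perm (Fin n) with σ.support = s, y ^ wex σ * q ^ cr σ =
      y ^ (n - #s) * Bpoly #s y q := by
  rw [Bpoly, mul_sum, sum_subtype _ (p := fun σ => σ.support = s) (by simp),
    sum_subtype {δ : Equiv.Perm (Fin #s) | ∀ i, δ i ≠ i} (p := (· ∈ derangements (Fin #s)))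
      (fun δ => by simp; rfl), ← (derangementsEquivSupportEq s).sum_comp]
  refine sum_congr rfl fun δ _ => ?_
  rw [derangementsEquivSupportEq_apply]
  refine pow_wex_mul_pow_cr_of_orderEmbedding y q (s.orderEmbOfFin rfl) (fun x => ?_) fun b hb => ?_
  · simp [← Finset.coe_orderIsoOfFin_apply, Equiv.Perm.ofSubtype_apply_coe]
  · rw [Finset.range_orderEmbOfFin] at hb
    exact Equiv.Perm.ofSubtype_apply_of_not_mem _ hb

theorem Apoly_eq_sum_choose_mul_Bpoly {R : Type*} [CommRing R] (y q : R) (n : ℕ) :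
    Apoly n y q = ∑ j ∈ range (n + 1), (n.choose j : R) * y ^ (n - j) * Bpoly j y q := by
  rw [Apoly, ← sum_fiberwise univ Equiv.Perm.support, ← powerset_univ]
  simp_rw [sum_support_eq_pow_wex_mul_pow_cr]
  rw [sum_powerset_apply_card (fun j => y ^ (n - j) * Bpoly j y q), card_univ, Fintype.card_fin]
  simp_rw [nsmul_eq_mul, mul_assoc]

theorem stmt3 (n : ℕ) {R : Type*} [CommRing R] (y q : R) :
    Bpoly n y q = ∑ k ∈ Finset.range (n+1),
      (n.choose k : R) * (-y) ^ (n - k) * Apoly k y q :=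
  binomial_inversion (f := (Apoly · y q)) y (Apoly_eq_sum_choose_mul_Bpoly y q) n
end
end

section
/- For every permutation \sigma of {1,...,n}, removing a fixed point f of \sigma (and relabeling the remaining values order-isomorphically) yields a permutation \sigma' of {1,...,n-1} with cr(\sigma') = cr(\sigma) and wex(\sigma') = wex(\sigma) - 1. -/
open Finset Polynomial
open scoped Classical

noncomputable section
/-- The permutation of `{1,…,n}` obtained from `σ ∈ S_{n+1}` by deleting the fixed
point `f` (position and value) and shifting larger positions and values down by one. -/
def removeFixedPoint {n : ℕ} (σ : Equiv.Perm (Fin (n+1))) (f : Fin (n+1)) :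
    Equiv.Perm (Fin n) :=
  Equiv.removeNone ((finSuccEquiv' f).symm.trans (σ.trans (finSuccEquiv' f)))

def raiseN (c k : ℕ) : ℕ := if k < c then k else k + 1

lemma succAbove_coe {n : ℕ} (f : Fin (n+1)) (j : Fin n) :
    (f.succAbove j : ℕ) = raiseN (f : ℕ) (j : ℕ) := by
  simp [Fin.succAbove, raiseN, Fin.lt_def]
  split_ifs <;> simp

lemma rfp_apply {n : ℕ} (σ : Equiv.Perm (Fin (n+1))) (f : Fin (n+1)) (hf : σ f = f)
    (i : Fin n) : σ (f.succAbove i) = f.succAbove (removeFixedPoint σ f i) := by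
  have hne : σ (f.succAbove i) ≠ f := by
    intro h
    exact Fin.succAbove_ne f i (σ.injective (h.trans hf.symm))
  obtain ⟨j, hj⟩ := Fin.exists_succAbove_eq hne
  have h1 : ((finSuccEquiv' f).symm.trans (σ.trans (finSuccEquiv' f))) (some i) = some j := by
    simp [← hj]
  have := Equiv.removeNone_some ((finSuccEquiv' f).symm.trans (σ.trans (finSuccEquiv' f)))
    ⟨j, h1⟩
  rw [h1] at this
  rw [removeFixedPoint]
  rw [← hj]
  congr 1
  exact Option.some_injective _ this.symm

lemma raiseN_lt {c x y : ℕ} : raiseN c x < raiseN c y ↔ x < y := by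
  unfold raiseN; split_ifs <;> omega

lemma raiseN_le {c x y : ℕ} : raiseN c x ≤ raiseN c y ↔ x ≤ y := by
  unfold raiseN; split_ifs <;> omega

lemma permVal_rfp {n : ℕ} (σ : Equiv.Perm (Fin (n+1))) (f : Fin (n+1)) (hf : σ f = f)
    (k : ℕ) (hk1 : 1 ≤ k) (hk2 : k ≤ n) :
    permVal σ (raiseN ((f : ℕ)+1) k) = raiseN ((f : ℕ)+1) (permVal (removeFixedPoint σ f) k) := by
  have hfn : (f : ℕ) < n + 1 := f.isLt
  have hr1 : 1 ≤ raiseN ((f : ℕ)+1) k ∧ raiseN ((f : ℕ)+1) k ≤ n + 1 := by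
    unfold raiseN; split_ifs <;> omega
  rw [permVal, dif_pos hr1, permVal, dif_pos ⟨hk1, hk2⟩]
  have hidx : (⟨raiseN ((f : ℕ)+1) k - 1, by omega⟩ : Fin (n+1)) =
      f.succAbove ⟨k - 1, by omega⟩ := by
    apply Fin.ext
    rw [succAbove_coe]
    simp only [raiseN]
    split_ifs <;> omega
  rw [hidx, rfp_apply σ f hf, succAbove_coe]
  have hgen : ∀ c x : ℕ, raiseN c x + 1 = raiseN (c+1) (x+1) := by
    intro c x; unfold raiseN; split_ifs <;> omega
  exact hgen _ _

lemma permVal_fix {n : ℕ} (σ : Equiv.Perm (Fin (n+1))) (f : Fin (n+1)) (hf : σ f = f) :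
    permVal σ ((f : ℕ)+1) = (f : ℕ)+1 := by
  have hfn : (f : ℕ) < n + 1 := f.isLt
  rw [permVal, dif_pos ⟨by omega, by omega⟩]
  have : (⟨(f : ℕ) + 1 - 1, by omega⟩ : Fin (n+1)) = f := by apply Fin.ext; simp
  rw [this, hf]

def lowerN (c m : ℕ) : ℕ := if m < c then m else m - 1

theorem stmt4 (n : ℕ) (σ : Equiv.Perm (Fin (n+1))) (f : Fin (n+1)) (hf : σ f = f) :
    cr (removeFixedPoint σ f) = cr σ ∧ wex (removeFixedPoint σ f) = wex σ - 1 := by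
  set f₁ := (f : ℕ) + 1 with hf₁
  have hfn : (f : ℕ) < n + 1 := f.isLt
  have hfix : permVal σ f₁ = f₁ := permVal_fix σ f hf
  have hrne : ∀ k, raiseN f₁ k ≠ f₁ := by intro k; unfold raiseN; split_ifs <;> omega
  have hrmem : ∀ k, 1 ≤ k → k ≤ n → 1 ≤ raiseN f₁ k ∧ raiseN f₁ k ≤ n + 1 := by
    intro k h1 h2; unfold raiseN; split_ifs <;> omega
  have hlmem : ∀ m, 1 ≤ m → m ≤ n + 1 → m ≠ f₁ → 1 ≤ lowerN f₁ m ∧ lowerN f₁ m ≤ n := by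
    intro m h1 h2 h3; unfold lowerN; split_ifs <;> omega
  have hrl : ∀ m, 1 ≤ m → m ≠ f₁ → raiseN f₁ (lowerN f₁ m) = m := by
    intro m h1 h3; unfold raiseN lowerN; split_ifs <;> omega
  have hlr : ∀ k, lowerN f₁ (raiseN f₁ k) = k := by
    intro k; unfold raiseN lowerN; split_ifs <;> omega
  have hcond : ∀ a b : ℕ, 1 ≤ a → a ≤ n → 1 ≤ b → b ≤ n →
      (((raiseN f₁ a < raiseN f₁ b ∧ raiseN f₁ b ≤ permVal σ (raiseN f₁ a) ∧
          permVal σ (raiseN f₁ a) < permVal σ (raiseN f₁ b)) ∨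
        (permVal σ (raiseN f₁ a) < permVal σ (raiseN f₁ b) ∧
          permVal σ (raiseN f₁ b) < raiseN f₁ a ∧ raiseN f₁ a < raiseN f₁ b)) ↔
       ((a < b ∧ b ≤ permVal (removeFixedPoint σ f) a ∧
          permVal (removeFixedPoint σ f) a < permVal (removeFixedPoint σ f) b) ∨
        (permVal (removeFixedPoint σ f) a < permVal (removeFixedPoint σ f) b ∧
          permVal (removeFixedPoint σ f) b < a ∧ a < b))) := by
    intro a b ha1 ha2 hb1 hb2
    rw [permVal_rfp σ f hf a ha1 ha2, permVal_rfp σ f hf b hb1 hb2]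
    simp only [← hf₁, raiseN_lt, raiseN_le]
  constructor
  · -- crossings
    apply Finset.card_nbij' (fun p => (raiseN f₁ p.1, raiseN f₁ p.2))
      (fun q => (lowerN f₁ q.1, lowerN f₁ q.2))
    · intro ⟨a, b⟩ hp
      simp only [Finset.mem_coe, Finset.mem_filter, Finset.mem_product, Finset.mem_Icc] at hp ⊢
      obtain ⟨⟨⟨ha1, ha2⟩, hb1, hb2⟩, hcnd⟩ := hp
      exact ⟨⟨hrmem a ha1 ha2, hrmem b hb1 hb2⟩, (hcond a b ha1 ha2 hb1 hb2).2 hcnd⟩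
    · intro ⟨a, b⟩ hq
      simp only [Finset.mem_coe, Finset.mem_filter, Finset.mem_product, Finset.mem_Icc] at hq ⊢
      obtain ⟨⟨⟨ha1, ha2⟩, hb1, hb2⟩, hcnd⟩ := hq
      have hane : a ≠ f₁ := by rintro rfl; rw [hfix] at hcnd; omega
      have hbne : b ≠ f₁ := by rintro rfl; rw [hfix] at hcnd; omega
      have ha' := hlmem a ha1 ha2 hane
      have hb' := hlmem b hb1 hb2 hbne
      refine ⟨⟨ha', hb'⟩, ?_⟩
      have := (hcond (lowerN f₁ a) (lowerN f₁ b) ha'.1 ha'.2 hb'.1 hb'.2)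
      rw [hrl a ha1 hane, hrl b hb1 hbne] at this
      exact this.1 hcnd
    · rintro ⟨a, b⟩ _
      simp only [Prod.mk.injEq]
      exact ⟨hlr a, hlr b⟩
    · intro ⟨a, b⟩ hq
      simp only [Finset.mem_coe, Finset.mem_filter, Finset.mem_product, Finset.mem_Icc] at hq
      obtain ⟨⟨⟨ha1, ha2⟩, hb1, hb2⟩, hcnd⟩ := hq
      have hane : a ≠ f₁ := by rintro rfl; rw [hfix] at hcnd; omega
      have hbne : b ≠ f₁ := by rintro rfl; rw [hfix] at hcnd; omega
      simp only [Prod.mk.injEq]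
      exact ⟨hrl a ha1 hane, hrl b hb1 hbne⟩
  · -- weak exceedances
    have hfmem : f₁ ∈ (Finset.Icc 1 (n+1)).filter fun i => i ≤ permVal σ i := by
      simp only [Finset.mem_filter, Finset.mem_Icc, hfix]
      omega
    have hkey : wex (removeFixedPoint σ f) =
        (((Finset.Icc 1 (n+1)).filter fun i => i ≤ permVal σ i).erase f₁).card := by
      apply Finset.card_nbij' (raiseN f₁) (lowerN f₁)
      · intro k hk
        simp only [Finset.mem_coe, Finset.mem_filter, Finset.mem_Icc] at hk
        obtain ⟨⟨h1, h2⟩, h3⟩ := hk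
        simp only [Finset.mem_coe, Finset.mem_erase, Finset.mem_filter, Finset.mem_Icc]
        refine ⟨hrne k, hrmem k h1 h2, ?_⟩
        rw [permVal_rfp σ f hf k h1 h2, raiseN_le]
        exact h3
      · intro m hm
        simp only [Finset.mem_coe, Finset.mem_erase, Finset.mem_filter, Finset.mem_Icc] at hm
        obtain ⟨hne, ⟨h1, h2⟩, h3⟩ := hm
        have h' := hlmem m h1 h2 hne
        simp only [Finset.mem_coe, Finset.mem_filter, Finset.mem_Icc]
        refine ⟨h', ?_⟩
        have := permVal_rfp σ f hf (lowerN f₁ m) h'.1 h'.2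
        rw [hrl m h1 hne] at this
        rw [← raiseN_le (c := f₁), ← this, hrl m h1 hne]
        exact h3
      · intro k _; exact hlr k
      · intro m hm
        simp only [Finset.mem_coe, Finset.mem_erase, Finset.mem_filter, Finset.mem_Icc] at hm
        exact hrl m hm.2.1.1 hm.1
    rw [hkey, Finset.card_erase_of_mem hfmem]
    rfl
end
end
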